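/- arXiv:1705.01683 — 4 statements merged into one kernel-verified Lean document; each statement's English description precedes it below -/
import Mathlib

section
/- Let G be a simple graph of order n ≥ 2 and let K₁ be a single vertex. Then μ(G ∨ K₁) > ((n−1)/n)·μ(G) + 2·√(n−1)/n. -/
open SimpleGraph

/-- The spectral radius of a finite simple graph: the largest eigenvalue
(supremum of the real spectrum) of its adjacency matrix. -/
noncomputable def specRad {V : Type*} [Fintype V] (G : SimpleGraph V) : ℝ :=
  letI := Classical.decEq V
  letI := Classical.decRel G.Adj
  sSup (spectrum ℝ (G.adjMatrix ℝ))

/-- The signless Laplacian spectral radius of a finite simple graph: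
the largest eigenvalue of `D(G) + A(G)`. -/
noncomputable def qRad {V : Type*} [Fintype V] (G : SimpleGraph V) : ℝ :=
  letI := Classical.decEq V
  letI := Classical.decRel G.Adj
  sSup (spectrum ℝ (G.degMatrix ℝ + G.adjMatrix ℝ))

/-- The join of two graphs: their disjoint union together with all edges between them. -/
def graphJoin {α β : Type*} (G : SimpleGraph α) (H : SimpleGraph β) :
    SimpleGraph (α ⊕ β) := (Gᶜ ⊕g Hᶜ)ᶜ

/-- A graph is Hamilton-connected if every two distinct vertices are the
endpoints of a Hamiltonian path. -/
def IsHamConnected {V : Type*} [DecidableEq V] (G : SimpleGraph V) : Prop :=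
  ∀ u v : V, u ≠ v → ∃ p : G.Walk u v, p.IsHamiltonian

/-- A graph is traceable from every vertex if every vertex is an endpoint
of some Hamiltonian path. -/
def TraceableFromEveryVertex {V : Type*} [DecidableEq V] (G : SimpleGraph V) : Prop :=
  ∀ u : V, ∃ (v : V) (p : G.Walk u v), p.IsHamiltonian

/-- A graph is traceable if it contains a Hamiltonian path. -/
def IsTraceable {V : Type*} [DecidableEq V] (G : SimpleGraph V) : Prop :=
  ∃ (u v : V) (p : G.Walk u v), p.IsHamiltonian

/-!
Rayleigh quotients. Pick a unit vector `z` on `V` with `μ(G) ≤ zᵀ A z` and `∑ z > 1`: if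
`μ(G) > 0`, the entrywise absolute value of a unit eigenvector for `μ(G)`, for which
`(∑ z)² ≥ zᵀ (I + A) z = 1 + zᵀ A z > 1` since `I + A` has entries at most `1`; otherwise the
normalised all-ones vector, with `∑ z = √n`. The test vector `(√(n-1) • z, 1)` on `G ∨ K₁` has
squared norm `n` and quadratic form `(n-1) zᵀ A z + 2 √(n-1) ∑ z > (n-1) μ(G) + 2 √(n-1)`.
-/

open Matrix

namespace Matrix.IsHermitian
variable {m : Type*} [Fintype m] [DecidableEq m] {A : Matrix m m ℝ}

open scoped MatrixOrder in
lemma dotProduct_mulVec_le_sSup_spectrum (hA : A.IsHermitian) (x : m → ℝ) :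
    x ⬝ᵥ A *ᵥ x ≤ sSup (spectrum ℝ A) * (x ⬝ᵥ x) := by
  have hle : A ≤ algebraMap ℝ _ (sSup (spectrum ℝ A)) :=
    le_algebraMap_of_spectrum_le fun r hr ↦ le_csSup (finite_spectrum A).bddAbove hr
  have := (le_iff.mp hle).dotProduct_mulVec_nonneg x
  simpa [sub_mulVec, dotProduct_sub, Algebra.algebraMap_eq_smul_one, smul_mulVec,
    dotProduct_smul] using this

lemma exists_mulVec_eq_sSup_spectrum_smul [Nonempty m] (hA : A.IsHermitian) :
    ∃ y : m → ℝ, y ⬝ᵥ y = 1 ∧ A *ᵥ y = sSup (spectrum ℝ A) • y := by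
  have hmem : sSup (spectrum ℝ A) ∈ spectrum ℝ A :=
    Set.Nonempty.csSup_mem (hA.spectrum_real_eq_range_eigenvalues ▸ Set.range_nonempty _)
      (finite_spectrum A)
  obtain ⟨j, hj⟩ := hA.spectrum_real_eq_range_eigenvalues.le hmem
  refine ⟨hA.eigenvectorBasis j, ?_, by rw [hA.mulVec_eigenvectorBasis, hj]⟩
  have := orthonormal_iff_ite.mp hA.eigenvectorBasis.orthonormal j j
  rw [if_pos rfl, EuclideanSpace.inner_eq_star_dotProduct] at this
  simpa using this

end Matrix.IsHermitian

lemma Matrix.dotProduct_mulVec_le_abs_dotProduct_mulVec_abs {m : Type*} [Fintype m]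
    {M : Matrix m m ℝ} (hM : ∀ i j, 0 ≤ M i j) (x : m → ℝ) : x ⬝ᵥ M *ᵥ x ≤ |x| ⬝ᵥ M *ᵥ |x| := by
  simp only [dotProduct, mulVec, Finset.mul_sum]
  refine Finset.sum_le_sum fun i _ ↦ Finset.sum_le_sum fun j _ ↦ ?_
  calc x i * (M i j * x j) ≤ |x i * (M i j * x j)| := le_abs_self _
    _ = |x| i * (M i j * |x| j) := by simp [abs_mul, abs_of_nonneg (hM i j)]

namespace SimpleGraph

lemma adjMatrix_apply_nonneg {V R : Type*} [Preorder R] [Zero R] [One R] [ZeroLEOneClass R]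
    (G : SimpleGraph V) [DecidableRel G.Adj] (i j : V) : 0 ≤ G.adjMatrix R i j := by
  by_cases h : G.Adj i j <;> simp [h]

section Join
variable {α β : Type*} (G : SimpleGraph α) (H : SimpleGraph β)

@[simp] lemma graphJoin_adj_inl_inl {u v : α} :
    (graphJoin G H).Adj (.inl u) (.inl v) ↔ G.Adj u v := by
  simp only [graphJoin, compl_adj, ne_eq, Sum.inl.injEq, sum_adj, not_and, not_not]
  exact ⟨fun h ↦ h.2 h.1, fun h ↦ ⟨G.ne_of_adj h, fun _ ↦ h⟩⟩

@[simp] lemma graphJoin_adj_inr_inr {u v : β} :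
    (graphJoin G H).Adj (.inr u) (.inr v) ↔ H.Adj u v := by
  simp only [graphJoin, compl_adj, ne_eq, Sum.inr.injEq, sum_adj, not_and, not_not]
  exact ⟨fun h ↦ h.2 h.1, fun h ↦ ⟨H.ne_of_adj h, fun _ ↦ h⟩⟩

@[simp] lemma graphJoin_adj_inl_inr {u : α} {v : β} : (graphJoin G H).Adj (.inl u) (.inr v) := by
  simp [graphJoin]

@[simp] lemma graphJoin_adj_inr_inl {u : β} {v : α} : (graphJoin G H).Adj (.inr u) (.inl v) := by
  simp [graphJoin]

lemma adjMatrix_graphJoin (R : Type*) [Zero R] [One R] [DecidableRel G.Adj] [DecidableRel H.Adj]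
    [DecidableRel (graphJoin G H).Adj] :
    (graphJoin G H).adjMatrix R =
      fromBlocks (G.adjMatrix R) (of fun _ _ ↦ 1) (of fun _ _ ↦ 1) (H.adjMatrix R) := by
  ext (i | i) (j | j) <;> simp [adjMatrix_apply]

lemma sumElim_dotProduct_adjMatrix_graphJoin_mulVec {R : Type*} [CommRing R] [Fintype α]
    [Fintype β] [DecidableRel G.Adj] [DecidableRel H.Adj] [DecidableRel (graphJoin G H).Adj]
    (x : α → R) (y : β → R) :
    Sum.elim x y ⬝ᵥ (graphJoin G H).adjMatrix R *ᵥ Sum.elim x y =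
      x ⬝ᵥ G.adjMatrix R *ᵥ x + y ⬝ᵥ H.adjMatrix R *ᵥ y + 2 * (∑ a, x a) * ∑ b, y b := by
  rw [adjMatrix_graphJoin, fromBlocks_mulVec, sumElim_dotProduct_sumElim]
  have hx : (of fun (_ : β) (_ : α) ↦ (1 : R)) *ᵥ x = fun _ ↦ ∑ a, x a := by
    ext; simp [mulVec, dotProduct]
  have hy : (of fun (_ : α) (_ : β) ↦ (1 : R)) *ᵥ y = fun _ ↦ ∑ b, y b := by
    ext; simp [mulVec, dotProduct]
  simp only [Sum.elim_comp_inl, Sum.elim_comp_inr, hx, hy, dotProduct_add]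
  simp only [dotProduct, ← Finset.sum_mul]
  ring

end Join

variable {V : Type*} [Fintype V] [DecidableEq V] (G : SimpleGraph V) [DecidableRel G.Adj]

lemma specRad_eq : specRad G = sSup (spectrum ℝ (G.adjMatrix ℝ)) := by
  unfold specRad
  congr!

lemma dotProduct_adjMatrix_mulVec_le_specRad (x : V → ℝ) :
    x ⬝ᵥ G.adjMatrix ℝ *ᵥ x ≤ specRad G * (x ⬝ᵥ x) :=
  G.specRad_eq ▸
    (isHermitian_iff_isSymm.mpr G.isSymm_adjMatrix).dotProduct_mulVec_le_sSup_spectrum x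

lemma exists_nonneg_unit_specRad_le [Nonempty V] :
    ∃ z : V → ℝ, 0 ≤ z ∧ z ⬝ᵥ z = 1 ∧ specRad G ≤ z ⬝ᵥ G.adjMatrix ℝ *ᵥ z := by
  obtain ⟨y, hy, hAy⟩ :=
    (isHermitian_iff_isSymm.mpr G.isSymm_adjMatrix).exists_mulVec_eq_sSup_spectrum_smul
  refine ⟨|y|, abs_nonneg y, by simpa [dotProduct, ← sq] using hy, ?_⟩
  calc specRad G = y ⬝ᵥ G.adjMatrix ℝ *ᵥ y := by
        rw [hAy, dotProduct_smul, hy, smul_eq_mul, mul_one, specRad_eq]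
    _ ≤ |y| ⬝ᵥ G.adjMatrix ℝ *ᵥ |y| :=
        dotProduct_mulVec_le_abs_dotProduct_mulVec_abs G.adjMatrix_apply_nonneg y

lemma dotProduct_self_add_dotProduct_adjMatrix_mulVec_le_sq_sum {z : V → ℝ} (hz : 0 ≤ z) :
    z ⬝ᵥ z + z ⬝ᵥ G.adjMatrix ℝ *ᵥ z ≤ (∑ v, z v) ^ 2 := by
  have hentry (i j : V) : (1 + G.adjMatrix ℝ) i j ≤ 1 := by
    by_cases h : i = j
    · subst h; simp
    · by_cases hij : G.Adj i j <;> simp [one_apply, h, hij]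
  calc z ⬝ᵥ z + z ⬝ᵥ G.adjMatrix ℝ *ᵥ z = z ⬝ᵥ (1 + G.adjMatrix ℝ) *ᵥ z := by
        rw [add_mulVec, one_mulVec, dotProduct_add]
    _ ≤ ∑ i, ∑ j, z i * z j := by
        simp only [dotProduct, mulVec, Finset.mul_sum]
        refine Finset.sum_le_sum fun i _ ↦ Finset.sum_le_sum fun j _ ↦ ?_
        exact mul_le_mul_of_nonneg_left (mul_le_of_le_one_left (hz j) (hentry i j)) (hz i)
    _ = (∑ v, z v) ^ 2 := by rw [sq, Finset.sum_mul_sum]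

lemma dotProduct_adjMatrix_mulVec_add_le_specRad_graphJoin (x : V → ℝ) (b : ℝ) :
    x ⬝ᵥ G.adjMatrix ℝ *ᵥ x + 2 * b * ∑ v, x v ≤
      (x ⬝ᵥ x + b ^ 2) * specRad (graphJoin G (⊤ : SimpleGraph (Fin 1))) := by
  classical
  have hJ := (graphJoin G (⊤ : SimpleGraph (Fin 1))).dotProduct_adjMatrix_mulVec_le_specRad
    (Sum.elim x fun _ ↦ b)
  rw [sumElim_dotProduct_adjMatrix_graphJoin_mulVec, sumElim_dotProduct_sumElim] at hJ
  have htop : (⊤ : SimpleGraph (Fin 1)).adjMatrix ℝ = 0 := by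
    ext i j
    simp [Subsingleton.elim i j]
  have hb : (fun _ : Fin 1 ↦ b) ⬝ᵥ (fun _ ↦ b) = b ^ 2 := by simp [dotProduct, sq]
  simp only [htop, zero_mulVec, dotProduct_zero, hb, Finset.sum_const, Finset.card_univ,
    Fintype.card_fin, one_smul] at hJ
  linarith

lemma exists_unit_specRad_le_of_one_lt_card (hV : 1 < Fintype.card V) :
    ∃ z : V → ℝ, z ⬝ᵥ z = 1 ∧ specRad G ≤ z ⬝ᵥ G.adjMatrix ℝ *ᵥ z ∧ 1 < ∑ v, z v := by
  have : Nonempty V := Fintype.card_pos_iff.mp (by omega)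
  rcases le_or_gt (specRad G) 0 with hμ | hμ
  · have hn : (1 : ℝ) < Fintype.card V := Nat.one_lt_cast.mpr hV
    refine ⟨fun _ ↦ (√(Fintype.card V : ℝ))⁻¹, ?_, ?_, ?_⟩
    · simp only [dotProduct, Finset.sum_const, Finset.card_univ, nsmul_eq_mul, ← mul_inv,
        Real.mul_self_sqrt (zero_le_one.trans hn.le)]
      exact mul_inv_cancel₀ (by positivity)
    · refine hμ.trans (dotProduct_nonneg_of_nonneg (fun _ ↦ by positivity) fun i ↦ ?_)
      exact dotProduct_nonneg_of_nonneg (G.adjMatrix_apply_nonneg i) fun _ ↦ by positivity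
    · simp only [Finset.sum_const, Finset.card_univ, nsmul_eq_mul, ← div_eq_mul_inv,
        Real.div_sqrt]
      exact Real.lt_sqrt_of_sq_lt (by simpa using hn)
  · obtain ⟨z, hz0, hz1, hμz⟩ := G.exists_nonneg_unit_specRad_le
    refine ⟨z, hz1, hμz, ?_⟩
    have hsq := G.dotProduct_self_add_dotProduct_adjMatrix_mulVec_le_sq_sum hz0
    have hs : 0 ≤ ∑ v, z v := Finset.sum_nonneg fun v _ ↦ hz0 v
    nlinarith

end SimpleGraph

/-- For a graph `G` of order `n ≥ 2`,
`μ(G ∨ K₁) > ((n−1)/n)·μ(G) + 2·√(n−1)/n`. -/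
theorem stmt_0 {V : Type*} [Fintype V] (n : ℕ) (hn : 2 ≤ n)
    (hcard : Fintype.card V = n) (G : SimpleGraph V) :
    ((n : ℝ) - 1) / n * specRad G + 2 * Real.sqrt ((n : ℝ) - 1) / n <
      specRad (graphJoin G (⊤ : SimpleGraph (Fin 1))) := by
  classical
  have hn' : (2 : ℝ) ≤ n := by exact_mod_cast hn
  obtain ⟨z, hz, hμz, hs⟩ := G.exists_unit_specRad_le_of_one_lt_card (by omega)
  have key := G.dotProduct_adjMatrix_mulVec_add_le_specRad_graphJoin (√((n : ℝ) - 1) • z) 1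
  have hr : √((n : ℝ) - 1) ^ 2 = n - 1 := Real.sq_sqrt (by linarith)
  have hr0 : 0 < √((n : ℝ) - 1) := Real.sqrt_pos.2 (by linarith)
  simp only [mulVec_smul, dotProduct_smul, smul_dotProduct, smul_eq_mul, mul_one, Pi.smul_apply,
    ← Finset.mul_sum, hz, ← sq, hr, one_pow, sub_add_cancel] at key
  rw [← mul_assoc, ← sq, hr] at key
  rw [div_mul_eq_mul_div, ← add_div, div_lt_iff₀ (by positivity)]
  linarith [mul_le_mul_of_nonneg_left hμz (by linarith : (0 : ℝ) ≤ n - 1),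
    mul_lt_mul_of_pos_left hs hr0]
end

section
/- Let G be a bipartite graph with parts X and Y, and let n = max{|X|, |Y|}. Then q(G) ≤ e(G)/n + n. -/
open SimpleGraph

/-!
Let `x` be an eigenvector of `Q = D + A` for an eigenvalue `μ > 0`. Then `y = |x|` satisfies
`μ y ≤ Q y`, and at a vertex `u` maximising `y u / d u` the neighbours contribute at most
`(y u / d u) · ∑_{w ~ u} d w`, so `μ ≤ d u + m u` with `m u` the average degree of the
neighbours of `u`. In a bipartite graph with parts of size at most `n`, `d u ≤ n` and
`∑_{w ~ u} d w ≤ e(G)`, since the neighbours of `u` lie in one part, whose degrees sum to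
`e(G)`.
Finally `d + S / d ≤ e / n + n` whenever `d ≤ n`, `S ≤ e` and `S ≤ d n`.
-/

open Finset Matrix

theorem Matrix.exists_mulVec_eq_smul_of_mem_spectrum {n K : Type*} [Fintype n] [DecidableEq n]
    [Field K] {A : Matrix n n K} {μ : K} (h : μ ∈ spectrum K A) :
    ∃ x : n → K, x ≠ 0 ∧ A *ᵥ x = μ • x := by
  rw [← Matrix.spectrum_toLin', ← Module.End.hasEigenvalue_iff_mem_spectrum] at h
  obtain ⟨x, hx⟩ := h.exists_hasEigenvector
  exact ⟨x, hx.2, by simpa using hx.apply_eq_smul⟩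

theorem add_div_le_div_add_of_le_mul {d n S e : ℝ} (hd : 0 < d) (hdn : d ≤ n) (hSe : S ≤ e)
    (hSdn : S ≤ d * n) : d + S / d ≤ e / n + n := by
  have hn : 0 < n := hd.trans_le hdn
  rcases le_total (d * n) e with hdne | hedn
  · have : S / d ≤ n := (div_le_iff₀ hd).2 (by linarith)
    have : d ≤ e / n := (le_div_iff₀ hn).2 hdne
    linarith
  · have : S / d ≤ e / d := by gcongr
    have key : (e / n + n) - (d + e / d) = (n - d) * (d * n - e) / (d * n) := by
      field_simp
      ring
    have : 0 ≤ (n - d) * (d * n - e) / (d * n) := by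
      apply div_nonneg (mul_nonneg _ _) (by positivity) <;> linarith
    linarith

namespace SimpleGraph

variable {V : Type*} {G : SimpleGraph V}

section SignlessLaplacian

variable [Fintype V] [DecidableEq V] [DecidableRel G.Adj]

variable (G) in
def signlessLapMatrix (R : Type*) [NonAssocSemiring R] : Matrix V V R :=
  G.degMatrix R + G.adjMatrix R

theorem signlessLapMatrix_mulVec_apply {R : Type*} [NonAssocSemiring R] (x : V → R) (v : V) :
    (G.signlessLapMatrix R *ᵥ x) v = G.degree v * x v + ∑ w ∈ G.neighborFinset v, x w := by
  rw [signlessLapMatrix, add_mulVec, Pi.add_apply, degMatrix_mulVec_apply, adjMatrix_mulVec_apply]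

theorem mul_abs_le_signlessLapMatrix_mulVec_abs {x : V → ℝ} {μ : ℝ} (hμ : 0 ≤ μ)
    (hx : G.signlessLapMatrix ℝ *ᵥ x = μ • x) (v : V) :
    μ * |x v| ≤ (G.signlessLapMatrix ℝ *ᵥ fun w => |x w|) v :=
  calc μ * |x v| = |(G.signlessLapMatrix ℝ *ᵥ x) v| := by
        rw [hx, Pi.smul_apply, smul_eq_mul, abs_mul, abs_of_nonneg hμ]
    _ = |G.degree v * x v + ∑ w ∈ G.neighborFinset v, x w| := by
        rw [signlessLapMatrix_mulVec_apply]
    _ ≤ |G.degree v * x v| + |∑ w ∈ G.neighborFinset v, x w| := abs_add_le _ _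
    _ ≤ G.degree v * |x v| + ∑ w ∈ G.neighborFinset v, |x w| :=
        add_le_add (by rw [abs_mul, Nat.abs_cast]) (abs_sum_le_sum_abs _ _)
    _ = _ := by rw [signlessLapMatrix_mulVec_apply]

theorem exists_le_degree_add_sum_degree_div_of_le_mulVec {y : V → ℝ} {μ : ℝ} (hμ : 0 < μ)
    (hy : 0 ≤ y) (hy0 : y ≠ 0) (hQ : ∀ v, μ * y v ≤ (G.signlessLapMatrix ℝ *ᵥ y) v) :
    ∃ u, 0 < G.degree u ∧
      μ ≤ G.degree u + (∑ w ∈ G.neighborFinset u, (G.degree w : ℝ)) / G.degree u := by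
  have degree_pos : ∀ v, 0 < y v → 0 < G.degree v := fun v hv => by
    by_contra! h
    have hN : G.neighborFinset v = ∅ := by
      rw [← card_eq_zero, card_neighborFinset_eq_degree]; omega
    have := hQ v
    rw [signlessLapMatrix_mulVec_apply, Nat.le_zero.1 h, hN] at this
    simp only [Nat.cast_zero, zero_mul, sum_empty, add_zero] at this
    nlinarith
  obtain ⟨v₁, hv₁⟩ : ∃ v, 0 < y v := by
    by_contra! h
    exact hy0 (funext fun v => le_antisymm (h v) (hy v))
  set T : Finset V := {v | 0 < G.degree v}
  have hv₁_mem : v₁ ∈ T := by simpa [T] using degree_pos v₁ hv₁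
  obtain ⟨u, hu_mem, hmax⟩ :=
    T.exists_max_image (fun v => y v / G.degree v) ⟨v₁, hv₁_mem⟩
  have hu : (0 : ℝ) < G.degree u := by simpa [T] using hu_mem
  set r := y u / G.degree u
  have hr : 0 < r :=
    (div_pos hv₁ (by exact_mod_cast degree_pos v₁ hv₁)).trans_le (hmax v₁ hv₁_mem)
  have hyu : y u = r * G.degree u := by simp only [r]; field_simp
  set S := ∑ w ∈ G.neighborFinset u, (G.degree w : ℝ)
  have hN : ∑ w ∈ G.neighborFinset u, y w ≤ r * S := by
    rw [mul_sum]
    refine sum_le_sum fun w hw => ?_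
    have hw : 0 < G.degree w :=
      (G.degree_pos_iff_exists_adj w).2 ⟨u, ((G.mem_neighborFinset _ _).1 hw).symm⟩
    rw [← div_le_iff₀ (by exact_mod_cast hw)]
    exact hmax w (by simpa [T] using hw)
  refine ⟨u, by exact_mod_cast hu, le_of_mul_le_mul_right ?_ (mul_pos hr hu)⟩
  calc μ * (r * G.degree u) ≤ G.degree u * y u + ∑ w ∈ G.neighborFinset u, y w := by
        rw [← hyu, ← signlessLapMatrix_mulVec_apply]; exact hQ u
    _ ≤ G.degree u * (r * G.degree u) + r * S := by rw [hyu]; gcongr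
    _ = (G.degree u + S / G.degree u) * (r * G.degree u) := by field_simp

theorem le_div_add_of_mem_spectrum_signlessLapMatrix {n e μ : ℝ}
    (hdeg : ∀ v, (G.degree v : ℝ) ≤ n)
    (hS : ∀ v, ∑ w ∈ G.neighborFinset v, (G.degree w : ℝ) ≤ e)
    (hμ : μ ∈ spectrum ℝ (G.signlessLapMatrix ℝ)) : μ ≤ e / n + n := by
  obtain ⟨x, hx0, hx⟩ := exists_mulVec_eq_smul_of_mem_spectrum hμ
  rcases le_or_gt μ 0 with hμ0 | hμ0
  · obtain ⟨v, -⟩ := Function.ne_iff.1 hx0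
    have hn : 0 ≤ n := (Nat.cast_nonneg _).trans (hdeg v)
    have he : 0 ≤ e := (sum_nonneg fun _ _ => Nat.cast_nonneg _).trans (hS v)
    have : 0 ≤ e / n + n := by positivity
    linarith
  obtain ⟨u, hu, hμu⟩ := G.exists_le_degree_add_sum_degree_div_of_le_mulVec hμ0
    (fun v => abs_nonneg (x v)) (by simpa [funext_iff] using hx0)
    (G.mul_abs_le_signlessLapMatrix_mulVec_abs hμ0.le hx)
  refine hμu.trans (add_div_le_div_add_of_le_mul (by exact_mod_cast hu) (hdeg u) (hS u) ?_)
  calc ∑ w ∈ G.neighborFinset u, (G.degree w : ℝ) ≤ ∑ _w ∈ G.neighborFinset u, n :=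
        sum_le_sum fun w _ => hdeg w
    _ = G.degree u * n := by rw [sum_const, card_neighborFinset_eq_degree, nsmul_eq_mul]

end SignlessLaplacian

section Bipartite

variable [Fintype V] [DecidableRel G.Adj] {s t : Finset V}

theorem IsBipartiteWith.degree_le_max (h : G.IsBipartiteWith s t) (v : V) :
    G.degree v ≤ max #s #t := by
  obtain hv | ⟨w, hw⟩ := (G.neighborFinset v).eq_empty_or_nonempty
  · simp [← card_neighborFinset_eq_degree, hv]
  rcases h.mem_of_adj ((G.mem_neighborFinset v w).1 hw) with ⟨hv, -⟩ | ⟨hv, -⟩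
  · exact (isBipartiteWith_degree_le h hv).trans (le_max_right _ _)
  · exact (isBipartiteWith_degree_le' h hv).trans (le_max_left _ _)

theorem IsBipartiteWith.sum_degree_neighborFinset_le (h : G.IsBipartiteWith s t) (v : V) :
    ∑ w ∈ G.neighborFinset v, G.degree w ≤ #G.edgeFinset := by
  obtain hv | ⟨w, hw⟩ := (G.neighborFinset v).eq_empty_or_nonempty
  · simp [hv]
  rcases h.mem_of_adj ((G.mem_neighborFinset v w).1 hw) with ⟨hv, -⟩ | ⟨hv, -⟩
  · rw [← isBipartiteWith_sum_degrees_eq_card_edges' h]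
    exact sum_le_sum_of_subset (isBipartiteWith_neighborFinset_subset h hv)
  · rw [← isBipartiteWith_sum_degrees_eq_card_edges h]
    exact sum_le_sum_of_subset (isBipartiteWith_neighborFinset_subset' h hv)

end Bipartite

theorem isBipartiteWith_univ_map_inl_inr {α β : Type*} [Fintype α] [Fintype β]
    {G : SimpleGraph (α ⊕ β)} (hX : ∀ a b, ¬ G.Adj (.inl a) (.inl b))
    (hY : ∀ a b, ¬ G.Adj (.inr a) (.inr b)) :
    G.IsBipartiteWith (univ.map .inl : Finset (α ⊕ β)) (univ.map .inr : Finset (α ⊕ β))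
    where
  disjoint := by simpa using Set.isCompl_range_inl_range_inr.disjoint
  mem_of_adj := by rintro (a | b) (a' | b') h <;> simp_all

end SimpleGraph

/-- For a bipartite graph `G` with parts `X`, `Y` and
`n = max(|X|, |Y|)`, one has `q(G) ≤ e(G)/n + n`. -/
theorem stmt_7 {α β : Type*} [Fintype α] [Fintype β] (G : SimpleGraph (α ⊕ β))
    (hX : ∀ a b, ¬ G.Adj (Sum.inl a) (Sum.inl b))
    (hY : ∀ a b, ¬ G.Adj (Sum.inr a) (Sum.inr b)) :
    qRad G ≤ (G.edgeSet.ncard : ℝ) / (max (Fintype.card α) (Fintype.card β) : ℕ) +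
      (max (Fintype.card α) (Fintype.card β) : ℕ) := by
  let := Classical.decEq (α ⊕ β)
  let := Classical.decRel G.Adj
  have hG := isBipartiteWith_univ_map_inl_inr hX hY
  have hdeg (v : α ⊕ β) : (G.degree v : ℝ) ≤ (max (Fintype.card α) (Fintype.card β) : ℕ) := by
    exact_mod_cast (hG.degree_le_max v).trans_eq (by simp)
  have hS (v : α ⊕ β) : ∑ w ∈ G.neighborFinset v, (G.degree w : ℝ) ≤ G.edgeSet.ncard := by
    rw [← coe_edgeFinset, Set.ncard_coe_finset]
    exact_mod_cast hG.sum_degree_neighborFinset_le v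
  exact Real.sSup_le (fun μ hμ => G.le_div_add_of_mem_spectrum_signlessLapMatrix hdeg hS hμ)
    (by positivity)
end

section
/- Let k ≥ 1 and n ≥ k³/2 + k + 2, and let G be a subgraph of C_n^k with minimum degree δ(G) ≥ k. Then μ(G) < √(n(n−k−1)), unless G = C_n^k. -/
open SimpleGraph

/-- The graph `C_n^k = O_{k,n−k} ⊔ K_{n−k−1,k}`, a bipartite graph with parts
`X = Fin (n−1)` (the first `k` vertices forming the part of `O_{k,n−k}`) and
`Y = Fin n` (the first `k` vertices forming the `k`-part of `K_{n−k−1,k}`):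
a vertex `x ∈ X` with `x < k` is adjacent exactly to the `y ∈ Y` with `y < k`,
and a vertex `x ∈ X` with `x ≥ k` is adjacent to all of `Y`. -/
def Cnk (n k : ℕ) : SimpleGraph (Fin (n - 1) ⊕ Fin n) :=
  SimpleGraph.fromRel (fun u v =>
    match u, v with
    | Sum.inl x, Sum.inr y => (x.val < k ∧ y.val < k) ∨ k ≤ x.val
    | _, _ => False)

/-- `G` is (up to a relabelling of each part) a bipartite subgraph of `C_n^k`
with the same bipartition. -/
def SubCnk (n k : ℕ) (G : SimpleGraph (Fin (n - 1) ⊕ Fin n)) : Prop :=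
  ∃ (σ : Fin (n - 1) ≃ Fin (n - 1)) (τ : Fin n ≃ Fin n),
    ∀ x y, G.Adj (Sum.inl x) (Sum.inr y) →
      (Cnk n k).Adj (Sum.inl (σ x)) (Sum.inr (τ y))


/-!
If `G ≠ C_n^k`, the minimum degree condition forces a missing edge `x₀y₀` with `x₀` in the
complete part `K_{n-k-1,k}` (the other vertices of `X` have degree exactly `k` in `C_n^k`), so
`G` is a subgraph of `H = C_n^k - x₀y₀`. For a bipartite graph with biadjacency matrix `B`,
the square of every nonzero eigenvalue `μ` is an eigenvalue of `B Bᵀ`, and a positive vector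
`u` with `B Bᵀ u < C u` entrywise gives `μ < √C` (Collatz–Wielandt); since `B Bᵀ u` is
monotone in `B`, it suffices to find such a `u` for `H` with `C = n (n - k - 1)`. We take `u`
constant on the three classes `{x < k}`, `{x₀}` and the rest of `X`, with values `a`, `c`, `1`;
the three row inequalities are then polynomial in `n, k, a, c` and can be satisfied as soon as
`n ≥ k³/2 + k + 2`.
-/
open Finset Matrix

namespace Matrix

variable {ι X Y : Type*} [Fintype ι]

theorem exists_mulVec_eq_smul_of_mem_spectrum_s8 [DecidableEq ι] {A : Matrix ι ι ℝ} {μ : ℝ}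
    (hμ : μ ∈ spectrum ℝ A) : ∃ v ≠ 0, A *ᵥ v = μ • v := by
  rw [← spectrum_toLin', ← Module.End.hasEigenvalue_iff_mem_spectrum] at hμ
  obtain ⟨v, hv, hv0⟩ := hμ.exists_hasEigenvector
  exact ⟨v, hv0, by simpa [Module.End.mem_eigenspace_iff] using hv⟩

/-- The Collatz–Wielandt bound. -/
theorem abs_lt_of_mulVec_eq_smul {M : Matrix ι ι ℝ} (hM : ∀ i j, 0 ≤ M i j) {u : ι → ℝ}
    (hu : ∀ i, 0 < u i) {C : ℝ} (hMu : ∀ i, (M *ᵥ u) i < C * u i) {v : ι → ℝ} (hv : v ≠ 0)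
    {μ : ℝ} (hMv : M *ᵥ v = μ • v) : |μ| < C := by
  obtain ⟨i₀, hi₀⟩ := Function.ne_iff.mp hv
  obtain ⟨i, -, hi⟩ := exists_max_image univ (fun j => |v j| / u j) ⟨i₀, mem_univ _⟩
  set r := |v i| / u i
  have hvj : ∀ j, |v j| ≤ r * u j := fun j => (div_le_iff₀ (hu j)).mp (hi j (mem_univ j))
  have hr : 0 < r := (div_pos (abs_pos.mpr hi₀) (hu i₀)).trans_le (hi i₀ (mem_univ _))
  have hvi : |v i| = r * u i := by rw [div_mul_cancel₀ _ (hu i).ne']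
  refine lt_of_mul_lt_mul_right ?_ (abs_nonneg (v i))
  calc |μ| * |v i| = |∑ j, M i j * v j| := by
        rw [← abs_mul, ← smul_eq_mul, ← Pi.smul_apply μ v, ← hMv]; rfl
    _ ≤ ∑ j, M i j * |v j| := by
        simpa only [abs_mul, abs_of_nonneg (hM i _)] using
          abs_sum_le_sum_abs (fun j => M i j * v j) univ
    _ ≤ ∑ j, M i j * (r * u j) := sum_le_sum fun j _ => mul_le_mul_of_nonneg_left (hvj j) (hM i j)
    _ = r * (M *ᵥ u) i := by
        simp only [mulVec, dotProduct, mul_sum]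
        exact sum_congr rfl fun j _ => by ring
    _ < r * (C * u i) := mul_lt_mul_of_pos_left (hMu i) hr
    _ = C * |v i| := by rw [hvi]; ring

theorem sq_lt_of_mem_spectrum_fromBlocks [Fintype X] [Fintype Y] [DecidableEq (X ⊕ Y)]
    {B : Matrix X Y ℝ} (hB : ∀ i j, 0 ≤ B i j) {u : X → ℝ} (hu : ∀ i, 0 < u i)
    {C : ℝ} (hC : 0 < C) (hBu : ∀ i, ((B * Bᵀ) *ᵥ u) i < C * u i) {μ : ℝ}
    (hμ : μ ∈ spectrum ℝ (fromBlocks 0 B Bᵀ 0)) : μ ^ 2 < C := by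
  obtain ⟨v, hv, hBv⟩ := exists_mulVec_eq_smul_of_mem_spectrum_s8 hμ
  rw [fromBlocks_mulVec] at hBv
  have hq : B *ᵥ (v ∘ Sum.inr) = μ • (v ∘ Sum.inl) := by
    funext x; simpa using congrFun hBv (Sum.inl x)
  have hp : Bᵀ *ᵥ (v ∘ Sum.inl) = μ • (v ∘ Sum.inr) := by
    funext y; simpa using congrFun hBv (Sum.inr y)
  by_cases hp0 : v ∘ Sum.inl = 0
  · suffices μ = 0 by rw [this]; simpa using hC
    by_contra hμ0
    rw [hp0, mulVec_zero, eq_comm, smul_eq_zero] at hp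
    refine hv (funext fun i => ?_)
    rcases i with x | y
    exacts [congrFun hp0 x, congrFun (hp.resolve_left hμ0) y]
  · have hM : ∀ i j, 0 ≤ (B * Bᵀ) i j := fun i j =>
      sum_nonneg fun l _ => mul_nonneg (hB i l) (hB j l)
    have hMv : (B * Bᵀ) *ᵥ (v ∘ Sum.inl) = μ ^ 2 • (v ∘ Sum.inl) := by
      rw [← mulVec_mulVec, hp, mulVec_smul, hq, smul_smul, sq]
    exact (le_abs_self _).trans_lt (abs_lt_of_mulVec_eq_smul hM hu hBu hp0 hMv)

theorem mul_transpose_mulVec_le [Fintype X] [Fintype Y] {A B : Matrix X Y ℝ}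
    (hA : ∀ i j, 0 ≤ A i j) (hAB : ∀ i j, A i j ≤ B i j) {u : X → ℝ} (hu : ∀ i, 0 ≤ u i)
    (x : X) : ((A * Aᵀ) *ᵥ u) x ≤ ((B * Bᵀ) *ᵥ u) x := by
  rw [← mulVec_mulVec, ← mulVec_mulVec]
  simp only [mulVec, dotProduct, transpose_apply]
  gcongr with y _ x' _
  · exact sum_nonneg fun x' _ => mul_nonneg (hA x' y) (hu x')
  · exact (hA x y).trans (hAB x y)
  · exact hAB x y
  · exact hu x'
  · exact hAB x' y

end Matrix

namespace SimpleGraph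

variable {X Y : Type*}

theorem adjMatrix_eq_fromBlocks {α : Type*} [Zero α] [One α] {G : SimpleGraph (X ⊕ Y)}
    [DecidableRel G.Adj] (hG : G ≤ completeBipartiteGraph X Y) :
    G.adjMatrix α = fromBlocks 0 (G.adjMatrix α).toBlocks₁₂ (G.adjMatrix α).toBlocks₁₂ᵀ 0 := by
  have hX : ∀ x x', ¬ G.Adj (.inl x) (.inl x') := fun x x' h => by simpa using hG h
  have hY : ∀ y y', ¬ G.Adj (.inr y) (.inr y') := fun y y' h => by simpa using hG h
  ext (x | y) (x' | y') <;> simp [adjMatrix_apply, toBlocks₁₂, hX, hY, G.adj_comm]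

theorem specRad_lt_sqrt_of_le_biadj [Fintype X] [Fintype Y] {G : SimpleGraph (X ⊕ Y)}
    (hG : G ≤ completeBipartiteGraph X Y) {B : Matrix X Y ℝ} (hB : ∀ x y, 0 ≤ B x y)
    (hGB : ∀ x y, G.Adj (.inl x) (.inr y) → 1 ≤ B x y) {u : X → ℝ} (hu : ∀ x, 0 < u x)
    {C : ℝ} (hC : 0 < C) (hBu : ∀ x, ((B * Bᵀ) *ᵥ u) x < C * u x) :
    specRad G < √C := by
  unfold specRad
  let := Classical.decEq (X ⊕ Y)
  let := Classical.decRel G.Adj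
  set A := (G.adjMatrix ℝ).toBlocks₁₂
  have hA : ∀ x y, 0 ≤ A x y := fun x y => by
    simp only [A, toBlocks₁₂, of_apply, adjMatrix_apply]; split_ifs <;> norm_num
  have hAB : ∀ x y, A x y ≤ B x y := fun x y => by
    simp only [A, toBlocks₁₂, of_apply, adjMatrix_apply]
    split_ifs with h
    exacts [hGB x y h, hB x y]
  have hAu : ∀ x, ((A * Aᵀ) *ᵥ u) x < C * u x := fun x =>
    (mul_transpose_mulVec_le hA hAB (fun x => (hu x).le) x).trans_lt (hBu x)
  have hspec : ∀ μ ∈ spectrum ℝ (G.adjMatrix ℝ), μ < √C := fun μ hμ => by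
    rw [adjMatrix_eq_fromBlocks hG] at hμ
    exact Real.lt_sqrt_of_sq_lt (sq_lt_of_mem_spectrum_fromBlocks hA hu hC hAu hμ)
  rcases (spectrum ℝ (G.adjMatrix ℝ)).eq_empty_or_nonempty with h | h
  · rw [h, Real.sSup_empty]; exact Real.sqrt_pos.mpr hC
  · exact ((finite_spectrum _).csSup_lt_iff h).mpr hspec

end SimpleGraph

theorem Fin.sum_ite_val_lt {R : Type*} [NonAssocSemiring R] {m k : ℕ} (hk : k ≤ m) (α : R) :
    ∑ x : Fin m, (if x.val < k then α else 0) = k * α := by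
  rw [sum_ite, Finset.sum_const, sum_const_zero, add_zero, Fin.card_filter_val_lt, min_eq_right hk,
    nsmul_eq_mul]

theorem Fin.sum_ite_val_lt_ite_eq {R : Type*} [CommRing R] {m k : ℕ} {z : Fin m} (hz : k ≤ z.val)
    (α β γ : R) :
    ∑ x : Fin m, (if x.val < k then α else if x = z then β else γ) =
      k * α + β + (m - k - 1) * γ := by
  have hsplit : ∀ x : Fin m, (if x.val < k then α else if x = z then β else γ) =
      γ + (if x.val < k then α - γ else 0) + (if x = z then β - γ else 0) := fun x => by
    split_ifs with hx hxz <;> first | (subst hxz; omega) | ring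
  simp only [hsplit, sum_add_distrib, Finset.sum_const, card_univ, Fintype.card_fin, nsmul_eq_mul,
    Fin.sum_ite_val_lt (hz.trans z.isLt.le), sum_ite_eq', mem_univ, if_true]
  ring

section Weights

variable {K s : ℝ}

theorem lt_two_of_cube_le (hK : 1 ≤ K) (hs : 2 ≤ s) (hKs : K ^ 3 + 2 ≤ 2 * s) :
    K ^ 2 * (K * s + 1) < 2 * ((s + K + 1) * s - K ^ 2) := by
  nlinarith [mul_le_mul_of_nonneg_right hKs (by linarith : (0 : ℝ) ≤ s),
    mul_nonneg (sub_nonneg.2 hK) (sub_nonneg.2 hK)]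

theorem lt_one_add_of_cube_le (hK : 1 ≤ K) (hs : 2 ≤ s) (hKs : K ^ 3 + 2 ≤ 2 * s) :
    K ^ 2 * (K * s + 1) * (s * (s + K) - K) <
      ((s + K + 1) * s - K ^ 2) * (2 * s ^ 2 + 2 * K * s - 2 * s - 3 * K) := by
  have h1 : K ^ 3 * s ≤ (2 * s - 2) * s := by nlinarith
  have h2 : 0 ≤ s * (s + K) - K := by nlinarith
  have h3 := mul_le_mul_of_nonneg_right h1 h2
  nlinarith [mul_nonneg (sub_nonneg.2 hK) (sub_nonneg.2 hK),
    mul_nonneg (sub_nonneg.2 hs) (sub_nonneg.2 hK),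
    mul_nonneg (mul_nonneg (sub_nonneg.2 hs) (sub_nonneg.2 hK)) (sub_nonneg.2 hK)]

/-- With `s = N - K - 1`, the weights are `c = 1 - t` for `t = (s - 2) / (s (s + K) - K)` and
`a = (K (s - t) + 1) / (N s - K²)`: the first inequality then holds with slack `1`, and the
other two reduce to `K² a < 2` and `K² a < 1 + (N - 1) t`. -/
theorem exists_cnkWeight_params {N : ℝ} (hK : 1 ≤ K) (hKN : K + 3 ≤ N)
    (hN : K ^ 3 / 2 + K + 2 ≤ N) :
    ∃ a c : ℝ, 0 < a ∧ 0 < c ∧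
      K * (K * a + c + (N - K - 2)) < N * (N - K - 1) * a ∧
      K ^ 2 * a + (N - 1) * c + (N - 1) * (N - K - 2) < N * (N - K - 1) * c ∧
      K ^ 2 * a + (N - 1) * c + N * (N - K - 2) < N * (N - K - 1) := by
  obtain ⟨s, rfl⟩ : ∃ s, N = s + K + 1 := ⟨N - K - 1, by ring⟩
  have hs : 2 ≤ s := by linarith
  have hKs : K ^ 3 + 2 ≤ 2 * s := by linarith
  have hD₁ : 0 < (s + K + 1) * s - K ^ 2 := by nlinarith
  have hD₂ : 0 < s * (s + K) - K := by nlinarith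
  set t := (s - 2) / (s * (s + K) - K)
  set a := (K * (s - t) + 1) / ((s + K + 1) * s - K ^ 2)
  have ht : t * (s * (s + K) - K) = s - 2 := div_mul_cancel₀ _ hD₂.ne'
  have ha : a * ((s + K + 1) * s - K ^ 2) = K * (s - t) + 1 := div_mul_cancel₀ _ hD₁.ne'
  have ht₀ : 0 ≤ t := div_nonneg (by linarith) hD₂.le
  have ht₁ : t < 1 := (div_lt_one hD₂).mpr (by nlinarith)
  have ha₀ : 0 < a := div_pos (by nlinarith) hD₁
  have hKa : K ^ 2 * a * ((s + K + 1) * s - K ^ 2) ≤ K ^ 2 * (K * s + 1) := by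
    have : 0 ≤ K ^ 3 * t := by positivity
    rw [mul_assoc, ha]; nlinarith
  have hKa₂ : K ^ 2 * a < 2 := by
    nlinarith [lt_two_of_cube_le hK hs hKs]
  have hKa₃ : K ^ 2 * a < 1 + (s + K) * t := by
    refine lt_of_mul_lt_mul_right ?_ (mul_pos hD₁ hD₂).le
    calc K ^ 2 * a * (((s + K + 1) * s - K ^ 2) * (s * (s + K) - K))
        = K ^ 2 * a * ((s + K + 1) * s - K ^ 2) * (s * (s + K) - K) := by ring
      _ ≤ K ^ 2 * (K * s + 1) * (s * (s + K) - K) := mul_le_mul_of_nonneg_right hKa hD₂.le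
      _ < ((s + K + 1) * s - K ^ 2) * (2 * s ^ 2 + 2 * K * s - 2 * s - 3 * K) :=
        lt_one_add_of_cube_le hK hs hKs
      _ = (1 + (s + K) * t) * (((s + K + 1) * s - K ^ 2) * (s * (s + K) - K)) := by
        linear_combination (-(s + K) * ((s + K + 1) * s - K ^ 2)) * ht
  refine ⟨a, 1 - t, ha₀, by linarith, ?_, ?_, ?_⟩ <;> nlinarith

end Weights

section Cnk

variable {n k : ℕ}

theorem cnk_adj_inl_inr {x : Fin (n - 1)} {y : Fin n} :
    (Cnk n k).Adj (.inl x) (.inr y) ↔ (x.val < k ∧ y.val < k) ∨ k ≤ x.val := by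
  simp [Cnk]

theorem cnk_le_completeBipartiteGraph : Cnk n k ≤ completeBipartiteGraph _ _ := by
  rintro (x | y) (x' | y') h <;> simp_all [Cnk]

/-- The vertices `x < k` of `C_n^k` have degree exactly `k`, so a subgraph of minimum degree
`k` can only miss edges at the other vertices. -/
theorem exists_not_adj_of_ne_cnk {G : SimpleGraph (Fin (n - 1) ⊕ Fin n)} (hsub : G ≤ Cnk n k)
    (hδ : ∀ v, k ≤ (G.neighborSet v).ncard) (hG : G ≠ Cnk n k) :
    ∃ x₀ y₀, k ≤ x₀.val ∧ ¬ G.Adj (.inl x₀) (.inr y₀) := by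
  obtain ⟨x₀, y₀, hC, hG⟩ :
      ∃ x y, (Cnk n k).Adj (.inl x) (.inr y) ∧ ¬ G.Adj (.inl x) (.inr y) := by
    by_contra! h
    refine hG (le_antisymm hsub ?_)
    rintro (x | y) (x' | y') hadj
    · simpa using cnk_le_completeBipartiteGraph hadj
    · exact h x y' hadj
    · exact (h x' y hadj.symm).symm
    · simpa using cnk_le_completeBipartiteGraph hadj
  refine ⟨x₀, y₀, not_lt.mp fun hx₀ => ?_, hG⟩
  have hy₀ : y₀.val < k := by
    rcases cnk_adj_inl_inr.mp hC with h | h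
    exacts [h.2, absurd h (not_le.mpr hx₀)]
  set S : Set (Fin n) := {y | y.val < k}
  have hN : G.neighborSet (.inl x₀) ⊆ Sum.inr '' (S \ {y₀}) := by
    rintro (x | y) hadj
    · simpa using cnk_le_completeBipartiteGraph (hsub hadj)
    · refine ⟨y, ⟨?_, ?_⟩, rfl⟩
      · rcases cnk_adj_inl_inr.mp (hsub hadj) with h | h
        exacts [h.2, absurd h (not_le.mpr hx₀)]
      · rintro rfl; exact hG hadj
  have hS : S.ncard ≤ k := by
    rw [Set.ncard_eq_toFinset_card']
    simp [S, Fin.card_filter_val_lt]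
  have := calc k ≤ (G.neighborSet (.inl x₀)).ncard := hδ _
    _ ≤ (Sum.inr '' (S \ {y₀})).ncard := Set.ncard_le_ncard hN
    _ ≤ (S \ {y₀}).ncard := Set.ncard_image_le
    _ < S.ncard := Set.ncard_sdiff_singleton_lt_of_mem hy₀
  omega

end Cnk

section CnkDeleteEdge

variable {n k : ℕ} {x₀ : Fin (n - 1)} {y₀ : Fin n} {a c : ℝ}

/-- The biadjacency matrix of `C_n^k - x₀y₀`, for `k ≤ x₀` (an edge with `x₀ < k` is kept). -/
def cnkBiadjDeleteEdge (n k : ℕ) (x₀ : Fin (n - 1)) (y₀ : Fin n) :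
    Matrix (Fin (n - 1)) (Fin n) ℝ :=
  fun x y => if x.val < k then (if y.val < k then 1 else 0) else if x = x₀ ∧ y = y₀ then 0 else 1

def cnkWeight {m : ℕ} (k : ℕ) (x₀ : Fin m) (a c : ℝ) : Fin m → ℝ :=
  fun x => if x.val < k then a else if x = x₀ then c else 1

theorem cnkBiadjDeleteEdge_nonneg (x : Fin (n - 1)) (y : Fin n) :
    0 ≤ cnkBiadjDeleteEdge n k x₀ y₀ x y := by
  unfold cnkBiadjDeleteEdge; split_ifs <;> norm_num

theorem cnkWeight_pos (ha : 0 < a) (hc : 0 < c) (x : Fin (n - 1)) : 0 < cnkWeight k x₀ a c x := by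
  unfold cnkWeight; split_ifs <;> first | assumption | norm_num

theorem transpose_mulVec_cnkWeight (hx₀ : k ≤ x₀.val) (y : Fin n) :
    ((cnkBiadjDeleteEdge n k x₀ y₀)ᵀ *ᵥ cnkWeight k x₀ a c) y =
      k * (if y.val < k then a else 0) + (if y = y₀ then 0 else c) + (n - k - 2) := by
  have hn : ((n - 1 : ℕ) : ℝ) = n - 1 := by
    rw [Nat.cast_sub (by omega), Nat.cast_one]
  have hterm : ∀ x, cnkBiadjDeleteEdge n k x₀ y₀ x y * cnkWeight k x₀ a c x =
      if x.val < k then (if y.val < k then a else 0)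
      else if x = x₀ then (if y = y₀ then 0 else c) else 1 := fun x => by
    unfold cnkBiadjDeleteEdge cnkWeight
    split_ifs <;> simp_all
  simp only [mulVec, dotProduct, transpose_apply, hterm, Fin.sum_ite_val_lt_ite_eq hx₀, hn]
  ring

theorem mul_transpose_mulVec_cnkWeight_le (hx₀ : k ≤ x₀.val) (hkn : k ≤ n) (ha : 0 ≤ a)
    (hc : 0 ≤ c) (x : Fin (n - 1)) :
    ((cnkBiadjDeleteEdge n k x₀ y₀ * (cnkBiadjDeleteEdge n k x₀ y₀)ᵀ) *ᵥ cnkWeight k x₀ a c) x ≤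
      if x.val < k then k * (k * a + c + (n - k - 2))
      else if x = x₀ then k ^ 2 * a + (n - 1) * c + (n - 1) * (n - k - 2)
      else k ^ 2 * a + (n - 1) * c + n * (n - k - 2) := by
  set B := cnkBiadjDeleteEdge n k x₀ y₀
  set T := Bᵀ *ᵥ cnkWeight k x₀ a c
  have hT : ∀ y, T y = k * (if y.val < k then a else 0) + (if y = y₀ then 0 else c) +
      (n - k - 2) := transpose_mulVec_cnkWeight hx₀
  have hsumT : ∑ y, T y = k ^ 2 * a + (n - 1) * c + n * (n - k - 2) := by
    have hc' : ∀ y : Fin n, (if y = y₀ then 0 else c) = c - if y = y₀ then c else 0 :=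
      fun y => by split_ifs <;> ring
    simp only [hT, hc', sum_add_distrib, sum_sub_distrib, ← mul_sum, Fin.sum_ite_val_lt hkn,
      Finset.sum_const, card_univ, Fintype.card_fin, nsmul_eq_mul, sum_ite_eq', mem_univ, if_true]
    ring
  have hrow : ((B * Bᵀ) *ᵥ cnkWeight k x₀ a c) x = ∑ y, B x y * T y := by
    rw [← mulVec_mulVec]; rfl
  rw [hrow]
  simp only [B, cnkBiadjDeleteEdge]
  split_ifs with hxk hxx₀
  · calc ∑ y, (if y.val < k then (1 : ℝ) else 0) * T y
        ≤ ∑ y : Fin n, (if y.val < k then k * a + c + (n - k - 2) else 0) := by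
          refine sum_le_sum fun y _ => ?_
          split_ifs with hy
          · rw [hT, if_pos hy, one_mul]; split_ifs <;> linarith
          · rw [zero_mul]
      _ = k * (k * a + c + (n - k - 2)) := Fin.sum_ite_val_lt hkn _
  · have hT₀ : n - k - 2 ≤ T y₀ := by
      rw [hT, if_pos rfl]; split_ifs <;> nlinarith
    have hdrop : ∀ y, (if x = x₀ ∧ y = y₀ then (0 : ℝ) else 1) * T y =
        T y - if y = y₀ then T y else 0 := fun y => by
      simp only [hxx₀, true_and]; split_ifs <;> ring
    simp only [hdrop, sum_sub_distrib, sum_ite_eq', mem_univ, if_true, hsumT]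
    linarith
  · simp only [hxx₀, false_and, if_false, one_mul]
    exact hsumT.le

theorem cnkBiadjDeleteEdge_eq_one {x : Fin (n - 1)} {y : Fin n}
    (h : (Cnk n k).Adj (.inl x) (.inr y)) (hne : ¬ (x = x₀ ∧ y = y₀)) :
    cnkBiadjDeleteEdge n k x₀ y₀ x y = 1 := by
  unfold cnkBiadjDeleteEdge
  rcases cnk_adj_inl_inr.mp h with h | h <;> split_ifs <;> first | rfl | omega

end CnkDeleteEdge

/-- Let `k ≥ 1`, `n ≥ k³/2 + k + 2`, and let `G` be a subgraph of
`C_n^k` with minimum degree at least `k`. Then `μ(G) < √(n(n−k−1))` unless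
`G = C_n^k`. -/
theorem stmt_8 (n k : ℕ) (hk : 1 ≤ k)
    (hn : (k : ℝ) ^ 3 / 2 + (k : ℝ) + 2 ≤ (n : ℝ))
    (G : SimpleGraph (Fin (n - 1) ⊕ Fin n)) (hsub : G ≤ Cnk n k)
    (hδ : ∀ v, k ≤ (G.neighborSet v).ncard) :
    specRad G < Real.sqrt ((n : ℝ) * ((n : ℝ) - k - 1)) ∨ G = Cnk n k := by
  refine or_iff_not_imp_right.mpr fun hG => ?_
  have hK : (1 : ℝ) ≤ k := by exact_mod_cast hk
  have hkn : k + 3 ≤ n := by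
    have : (k : ℝ) + 2 < n := by nlinarith [one_le_pow₀ (n := 3) hK]
    have : k + 2 < n := by exact_mod_cast this
    omega
  have hKN : (k : ℝ) + 3 ≤ n := by exact_mod_cast hkn
  obtain ⟨x₀, y₀, hx₀, hx₀y₀⟩ := exists_not_adj_of_ne_cnk hsub hδ hG
  obtain ⟨a, c, ha, hc, hrow, hrow₀, hrow'⟩ := exists_cnkWeight_params hK hKN hn
  refine specRad_lt_sqrt_of_le_biadj (B := cnkBiadjDeleteEdge n k x₀ y₀)
    (hsub.trans cnk_le_completeBipartiteGraph) cnkBiadjDeleteEdge_nonneg (fun x y hxy => ?_)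
    (cnkWeight_pos ha hc) (by nlinarith)
    fun x => (mul_transpose_mulVec_cnkWeight_le hx₀ (by omega) ha.le hc.le x).trans_lt ?_
  · refine (cnkBiadjDeleteEdge_eq_one (hsub hxy) ?_).ge
    rintro ⟨rfl, rfl⟩
    exact hx₀y₀ hxy
  · unfold cnkWeight
    split_ifs <;> linarith
end

section
/- If G is a graph of order n with m edges and minimum degree δ, then μ(G) ≤ (δ−1)/2 + √(2m − nδ + (δ+1)²/4). -/
open SimpleGraph

/-!
Let `μ` be the spectral radius and `y` a nonnegative eigenvector of `μ` with largest entry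
`y u = 1` (Perron); put `S = ∑ y`. Summing `A y = μ y` gives `μ S = ∑ d_w y_w`, so
`2m = ∑ d_w ≥ μ S + δ (n - S)`, i.e. `(μ - δ) S ≤ 2m - nδ`; in particular `μ ≥ δ`. The entries of
`y` at `u` and at its neighbours already sum to `1 + μ`, so `S ≥ μ + 1` and
`(μ - δ)(μ + 1) ≤ 2m - nδ`, which is the claim after completing the square.
-/

open Matrix Finset

namespace Matrix

variable {ι : Type*} [Fintype ι] {A : Matrix ι ι ℝ}

lemma dotProduct_mulVec_le_abs (hA : ∀ i j, 0 ≤ A i j) (v : ι → ℝ) :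
    v ⬝ᵥ A *ᵥ v ≤ |v| ⬝ᵥ A *ᵥ |v| := by
  simp only [dotProduct, mulVec, mul_sum, Pi.abs_apply]
  refine sum_le_sum fun i _ ↦ sum_le_sum fun j _ ↦ ?_
  calc v i * (A i j * v j) ≤ |v i * (A i j * v j)| := le_abs_self _
    _ = |v i| * (A i j * |v j|) := by rw [abs_mul, abs_mul, abs_of_nonneg (hA i j)]

variable [DecidableEq ι]

open scoped MatrixOrder in
lemma IsHermitian.posSemidef_sSup_spectrum_smul_one_sub (hA : A.IsHermitian) :
    (sSup (spectrum ℝ A) • (1 : Matrix ι ι ℝ) - A).PosSemidef := by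
  rw [← Algebra.algebraMap_eq_smul_one, ← Matrix.le_iff]
  exact le_algebraMap_of_spectrum_le (fun x hx ↦ le_csSup A.finite_real_spectrum.bddAbove hx)
    hA.isSelfAdjoint

lemma IsHermitian.exists_mulVec_eq_sSup_spectrum_smul_s14 [Nonempty ι] (hA : A.IsHermitian) :
    ∃ v : ι → ℝ, v ≠ 0 ∧ A *ᵥ v = sSup (spectrum ℝ A) • v := by
  have hmem : sSup (spectrum ℝ A) ∈ Set.range hA.eigenvalues := by
    rw [← hA.spectrum_real_eq_range_eigenvalues]
    refine Set.Nonempty.csSup_mem ?_ A.finite_real_spectrum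
    exact ⟨_, hA.eigenvalues_mem_spectrum_real (Classical.arbitrary ι)⟩
  obtain ⟨i, hi⟩ := hmem
  refine ⟨hA.eigenvectorBasis i, ?_, hi ▸ hA.mulVec_eigenvectorBasis i⟩
  exact (WithLp.ofLp_eq_zero 2).ne.2 (hA.eigenvectorBasis.orthonormal.ne_zero i)

theorem IsHermitian.exists_nonneg_mulVec_eq_sSup_spectrum_smul [Nonempty ι] (hA : A.IsHermitian)
    (hnn : ∀ i j, 0 ≤ A i j) :
    ∃ x : ι → ℝ, x ≠ 0 ∧ 0 ≤ x ∧ A *ᵥ x = sSup (spectrum ℝ A) • x := by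
  obtain ⟨v, hv0, hv⟩ := hA.exists_mulVec_eq_sSup_spectrum_smul_s14
  set μ := sSup (spectrum ℝ A)
  have hM := hA.posSemidef_sSup_spectrum_smul_one_sub
  have hquad (x : ι → ℝ) : x ⬝ᵥ (μ • 1 - A) *ᵥ x = μ * (x ⬝ᵥ x) - x ⬝ᵥ A *ᵥ x := by
    simp only [sub_mulVec, smul_mulVec, one_mulVec, dotProduct_sub, dotProduct_smul, smul_eq_mul]
  have habs : |v| ⬝ᵥ |v| = v ⬝ᵥ v := by simp [dotProduct, abs_mul_abs_self]
  -- `|v|` attains the maximum `μ` of the Rayleigh quotient, so it lies in the kernel of the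
  -- positive semidefinite matrix `μ • 1 - A`.
  have hker : (μ • 1 - A) *ᵥ |v| = 0 := by
    refine (hM.dotProduct_mulVec_zero_iff _).mp (le_antisymm ?_ ?_)
    · have := dotProduct_mulVec_le_abs hnn v
      rw [hv, dotProduct_smul, smul_eq_mul] at this
      rw [star_trivial, hquad, habs]
      linarith
    · simpa using hM.dotProduct_mulVec_nonneg |v|
  refine ⟨|v|, by simpa using hv0, abs_nonneg v, ?_⟩
  rwa [sub_mulVec, smul_mulVec, one_mulVec, sub_eq_zero, eq_comm] at hker

theorem IsHermitian.exists_perron_vector [Nonempty ι] (hA : A.IsHermitian)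
    (hnn : ∀ i j, 0 ≤ A i j) :
    ∃ (y : ι → ℝ) (u : ι), 0 ≤ y ∧ y ≤ 1 ∧ y u = 1 ∧ A *ᵥ y = sSup (spectrum ℝ A) • y := by
  obtain ⟨x, hx0, hxnn, hx⟩ := hA.exists_nonneg_mulVec_eq_sSup_spectrum_smul hnn
  obtain ⟨u, -, hu⟩ := exists_max_image univ x univ_nonempty
  have hxu : 0 < x u := (hxnn u).lt_of_ne fun h ↦
    hx0 (funext fun w ↦ le_antisymm (h ▸ hu w (mem_univ w)) (hxnn w))
  refine ⟨(x u)⁻¹ • x, u, smul_nonneg (inv_nonneg.2 hxu.le) hxnn, fun w ↦ ?_, ?_, ?_⟩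
  · simpa [inv_mul_le_one₀ hxu] using hu w (mem_univ w)
  · simp [hxu.ne']
  · rw [mulVec_smul, hx, smul_comm]

end Matrix

namespace SimpleGraph

variable {V : Type*} [Fintype V] (G : SimpleGraph V) [DecidableRel G.Adj]

lemma specRad_eq_sSup_spectrum [DecidableEq V] :
    specRad G = sSup (spectrum ℝ (G.adjMatrix ℝ)) := by
  unfold specRad
  congr!

lemma sum_adjMatrix_mulVec (y : V → ℝ) :
    ∑ w, (G.adjMatrix ℝ *ᵥ y) w = ∑ w, G.degree w * y w := by
  rw [← one_dotProduct, dotProduct_mulVec]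
  simp [dotProduct]

lemma add_sum_neighborFinset_le_sum [DecidableEq V] {y : V → ℝ} (hy : 0 ≤ y) (u : V) :
    y u + ∑ w ∈ G.neighborFinset u, y w ≤ ∑ w, y w := by
  rw [← sum_insert (G.notMem_neighborFinset_self u)]
  exact sum_le_sum_of_subset_of_nonneg (subset_univ _) fun w _ _ ↦ hy w

theorem specRad_sub_minDegree_mul_add_one_le :
    (specRad G - G.minDegree) * (specRad G + 1) ≤
      2 * #G.edgeFinset - Fintype.card V * G.minDegree := by
  classical
  rw [specRad_eq_sSup_spectrum]
  rcases isEmpty_or_nonempty V with hV | hV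
  · simp [spectrum.of_subsingleton]
  obtain ⟨y, u, hy0, hy1, hyu, hy⟩ := (G.isHermitian_adjMatrix ℝ).exists_perron_vector
    fun i j ↦ by by_cases h : G.Adj i j <;> simp [h]
  set μ := sSup (spectrum ℝ (G.adjMatrix ℝ))
  set δ : ℝ := (G.minDegree : ℝ)
  set S := ∑ w, y w
  have hδ (w : V) : δ ≤ G.degree w := Nat.cast_le.2 (G.minDegree_le_degree w)
  have hμS : μ * S = ∑ w, G.degree w * y w := by
    rw [← sum_adjMatrix_mulVec, hy, mul_sum]
    rfl
  have hS : μ + 1 ≤ S := by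
    have := G.add_sum_neighborFinset_le_sum hy0 u
    rw [← adjMatrix_mulVec_apply, hy, Pi.smul_apply, hyu, smul_eq_mul, mul_one] at this
    linarith
  have hδμ : δ ≤ μ := by
    have h1S : 1 ≤ S := hyu ▸ single_le_sum (fun w _ ↦ hy0 w) (mem_univ u)
    refine le_of_mul_le_mul_right ?_ (by linarith : (0 : ℝ) < S)
    rw [hμS, mul_sum]
    exact sum_le_sum fun w _ ↦ mul_le_mul_of_nonneg_right (hδ w) (hy0 w)
  have h2m : μ * S + δ * (Fintype.card V - S) ≤ 2 * #G.edgeFinset := by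
    have hdeg : (2 * #G.edgeFinset : ℝ) = ∑ w, (G.degree w * y w + G.degree w * (1 - y w)) := by
      simp only [mul_sub, mul_one, add_sub_cancel]
      exact_mod_cast G.sum_degrees_eq_twice_card_edges.symm
    have hrest : δ * (Fintype.card V - S) ≤ ∑ w, G.degree w * (1 - y w) := by
      have : Fintype.card V - S = ∑ w, (1 - y w) := by simp [S, sum_sub_distrib]
      rw [this, mul_sum]
      exact sum_le_sum fun w _ ↦ mul_le_mul_of_nonneg_right (hδ w) (sub_nonneg.2 (hy1 w))
    rw [hdeg, sum_add_distrib, ← hμS]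
    linarith
  nlinarith [mul_le_mul_of_nonneg_left hS (sub_nonneg.2 hδμ)]

end SimpleGraph

/-- If `G` is a graph of order `n` with `m` edges and minimum
degree `δ`, then `μ(G) ≤ (δ−1)/2 + √(2m − nδ + (δ+1)²/4)`. -/
theorem stmt_14 {V : Type*} [Fintype V] (n m δ : ℕ)
    (G : SimpleGraph V) [DecidableRel G.Adj]
    (hcard : Fintype.card V = n) (hm : G.edgeSet.ncard = m)
    (hδ : G.minDegree = δ) :
    specRad G ≤ ((δ : ℝ) - 1) / 2 +
      Real.sqrt (2 * (m : ℝ) - (n : ℝ) * δ + ((δ : ℝ) + 1) ^ 2 / 4) := by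
  classical
  have hm' : #G.edgeFinset = m := by rw [← hm, ← coe_edgeFinset, Set.ncard_coe_finset]
  have key := G.specRad_sub_minDegree_mul_add_one_le
  rw [hcard, hm', hδ] at key
  have := Real.le_sqrt_of_sq_le
    (show (specRad G - ((δ : ℝ) - 1) / 2) ^ 2 ≤ 2 * (m : ℝ) - n * δ + ((δ : ℝ) + 1) ^ 2 / 4 by
      nlinarith)
  linarith
end
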